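/- Let S be an inverse semigroup without zero element and let S⁰ be S with an external zero adjoined. Then diam(Γ(S⁰)) ∈ {1, 2} if and only if |S/σ| ≥ 2, i.e., if and only if there exist a, b ∈ S with (a,b) ∉ σ. -/

import Mathlib

namespace ZDG

variable {S : Type*} [Semigroup S]

/-- The natural partial order on an inverse semigroup: `a ≤ b` iff `a = e * b`
for some idempotent `e`. -/
def nle (a b : S) : Prop := ∃ e : S, e * e = e ∧ a = e * b

/-- `omg a b` is the set `ω(a,b)` of common lower bounds of `a` and `b` with respect
to the natural partial order. -/
def omg (a b : S) : Set S := {c | nle c a ∧ nle c b}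

lemma omg_comm (a b : S) : omg a b = omg b a := by
  ext c; exact and_comm

/-- `Zx z` is the set `Z(S)×` of nonzero zero-divisors of `S` (with zero element `z`). -/
def Zx (z : S) : Set S := {a | a ≠ z ∧ ∃ b : S, b ≠ z ∧ omg a b = {z}}

/-- The zero-divisor graph `Γ(S)`: vertices are the elements of `Z(S)×`, and two
distinct vertices `a`, `b` are adjacent iff `ω(a,b) = {z}`. -/
def ZDGraph (z : S) : SimpleGraph (Zx z) where
  Adj a b := (a : S) ≠ (b : S) ∧ omg (a : S) (b : S) = {z}
  symm := ⟨by
    rintro a b ⟨h1, h2⟩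
    exact ⟨fun h => h1 h.symm, (omg_comm (b : S) (a : S)).trans h2⟩⟩
  loopless := ⟨by rintro a ⟨h1, -⟩; exact h1 rfl⟩

/-- The set of minimal elements of `S \ {z}` with respect to the natural partial order. -/
def MinOf (z : S) : Set S := {x | x ≠ z ∧ ∀ y : S, y ≠ z → nle y x → y = x}

/-- The annihilator of `x`: the set of `y` with `ω(x,y) = {z}`. -/
def Ann (z : S) (x : S) : Set S := {y | omg x y = {z}}

end ZDG

open ZDG

namespace ZDG

/-- The least group congruence `σ` on an inverse semigroup: `a σ b` iff `e*a = f*b`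
for some idempotents `e`, `f`. -/
def sigmaRel {S : Type*} [Semigroup S] (a b : S) : Prop :=
  ∃ e f : S, e * e = e ∧ f * f = f ∧ e * a = f * b

end ZDG

namespace ZDG

variable {S : Type*} [Semigroup S]

lemma zero_nle (x : WithZero S) : nle (0 : WithZero S) x :=
  ⟨0, by simp, by simp⟩

lemma omg_eq_single {a b : S} :
    omg (↑a : WithZero S) (↑b) = {(0 : WithZero S)} ↔ ¬ sigmaRel a b := by
  constructor
  · rintro h ⟨e, f, he, hf, heq⟩
    have hc : (↑(e * a) : WithZero S) ∈ omg (↑a : WithZero S) (↑b) := by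
      refine ⟨⟨(e : WithZero S), ?_, ?_⟩, ⟨(f : WithZero S), ?_, ?_⟩⟩
      · rw [← WithZero.coe_mul, he]
      · rw [← WithZero.coe_mul]
      · rw [← WithZero.coe_mul, hf]
      · rw [← WithZero.coe_mul, heq]
    rw [h] at hc
    exact WithZero.coe_ne_zero hc
  · intro hns
    ext c
    simp only [Set.mem_singleton_iff]
    constructor
    · rintro ⟨⟨e, he, hce⟩, ⟨f, hf, hcf⟩⟩
      by_contra hc0
      obtain ⟨x, rfl⟩ := WithZero.ne_zero_iff_exists.mp hc0
      have he0 : e ≠ 0 := by rintro rfl; simp at hce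
      have hf0 : f ≠ 0 := by rintro rfl; simp at hcf
      obtain ⟨e', rfl⟩ := WithZero.ne_zero_iff_exists.mp he0
      obtain ⟨f', rfl⟩ := WithZero.ne_zero_iff_exists.mp hf0
      rw [← WithZero.coe_mul, WithZero.coe_inj] at he hf hce hcf
      exact hns ⟨e', f', he, hf, by rw [← hce, ← hcf]⟩
    · rintro rfl
      exact ⟨zero_nle _, zero_nle _⟩

lemma idem_mul {e f : S} (he : e * e = e) (hf : f * f = f) (hef : e * f = f * e) :
    (e * f) * (e * f) = e * f := by
  calc (e * f) * (e * f) = e * ((f * e) * f) := by simp [mul_assoc]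
    _ = e * ((e * f) * f) := by rw [hef]
    _ = (e * e) * (f * f) := by simp [mul_assoc]
    _ = e * f := by rw [he, hf]

end ZDG

/-- `diam(Γ(S⁰)) ∈ {1, 2}` iff `|S/σ| ≥ 2`. -/
theorem stmt17 {S : Type*} [Semigroup S]
    (hinv : ∀ a : S, ∃ b : S, a * b * a = a ∧ b * a * b = b)
    (hcomm : ∀ e f : S, e * e = e → f * f = f → e * f = f * e)
    (hnz : ¬ ∃ z : S, ∀ x : S, z * x = z ∧ x * z = z) :
    (ZDGraph (0 : WithZero S)).ediam ∈ ({1, 2} : Set ℕ∞) ↔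
      ∃ a b : S, ¬ sigmaRel a b := by
  have hrefl : ∀ a : S, sigmaRel a a := by
    intro a
    obtain ⟨b, h1, h2⟩ := hinv a
    have hi : (a * b) * (a * b) = a * b := by
      rw [← mul_assoc, h1]
    exact ⟨a * b, a * b, hi, hi, rfl⟩
  have hsymm : ∀ a b : S, sigmaRel a b → sigmaRel b a := by
    rintro a b ⟨e, f, he, hf, heq⟩; exact ⟨f, e, hf, he, heq.symm⟩
  have htrans : ∀ a b c : S, sigmaRel a b → sigmaRel b c → sigmaRel a c := by
    rintro a b c ⟨e, f, he, hf, h1⟩ ⟨g, h, hg, hh, h2⟩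
    refine ⟨g * e, f * h, idem_mul hg he (hcomm g e hg he),
      idem_mul hf hh (hcomm f h hf hh), ?_⟩
    calc (g * e) * a = g * (f * b) := by rw [mul_assoc, h1]
      _ = (g * f) * b := by rw [mul_assoc]
      _ = (f * g) * b := by rw [hcomm g f hg hf]
      _ = f * (h * c) := by rw [mul_assoc, h2]
      _ = (f * h) * c := by rw [mul_assoc]
  constructor
  · intro hd
    have hne0 : (ZDGraph (0 : WithZero S)).ediam ≠ 0 := by
      rcases hd with h | h <;> simp_all
    have hnetop : (ZDGraph (0 : WithZero S)).ediam ≠ ⊤ := by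
      rcases hd with h | h <;> simp_all
    -- there must be an edge
    have hadj : ∃ u v : Zx (0 : WithZero S), (ZDGraph (0 : WithZero S)).Adj u v := by
      by_contra hno
      push_neg at hno
      have hall : ∀ u v : Zx (0 : WithZero S),
          (ZDGraph (0 : WithZero S)).edist u v = 0 := by
        intro u v
        rcases eq_or_ne u v with rfl | huv
        · exact SimpleGraph.edist_self
        by_contra h0
        have hreach : (ZDGraph (0 : WithZero S)).Reachable u v := by
          by_contra hr
          exact hnetop (top_le_iff.mp
            ((SimpleGraph.edist_eq_top_of_not_reachable hr).ge.trans
              SimpleGraph.edist_le_ediam))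
        obtain ⟨p⟩ := hreach
        cases p with
        | nil => exact huv rfl
        | cons h _ => exact (hno _ _) h
      have : (ZDGraph (0 : WithZero S)).ediam ≤ 0 :=
        SimpleGraph.ediam_le_of_edist_le fun u v => (hall u v).le
      exact hne0 (le_antisymm this bot_le)
    obtain ⟨u, v, huv, homg⟩ := hadj
    obtain ⟨a, ha⟩ := WithZero.ne_zero_iff_exists.mp u.2.1
    obtain ⟨b, hb⟩ := WithZero.ne_zero_iff_exists.mp v.2.1
    refine ⟨a, b, omg_eq_single.mp ?_⟩
    rw [ha, hb]; exact homg
  · rintro ⟨a, b, hab⟩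
    have hane : (↑a : WithZero S) ≠ 0 := WithZero.coe_ne_zero
    have hbne : (↑b : WithZero S) ≠ 0 := WithZero.coe_ne_zero
    have homg : omg (↑a : WithZero S) (↑b) = {0} := omg_eq_single.mpr hab
    have va : (↑a : WithZero S) ∈ Zx (0 : WithZero S) := ⟨hane, ↑b, hbne, homg⟩
    have vb : (↑b : WithZero S) ∈ Zx (0 : WithZero S) :=
      ⟨hbne, ↑a, hane, (omg_comm _ _).trans homg⟩
    set G := ZDGraph (0 : WithZero S) with hG
    have hadj : G.Adj ⟨↑a, va⟩ ⟨↑b, vb⟩ := by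
      refine ⟨?_, homg⟩
      simp only [ne_eq, WithZero.coe_inj]
      rintro rfl
      exact hab (hrefl a)
    have h1 : (1 : ℕ∞) ≤ G.ediam := by
      rw [← SimpleGraph.edist_eq_one_iff_adj.mpr hadj]
      exact SimpleGraph.edist_le_ediam
    have h2 : G.ediam ≤ 2 := by
      apply SimpleGraph.ediam_le_of_edist_le
      intro u v
      rcases eq_or_ne u v with rfl | huv
      · simp [SimpleGraph.edist_self]
      obtain ⟨u', hu'⟩ := WithZero.ne_zero_iff_exists.mp u.2.1
      obtain ⟨v', hv'⟩ := WithZero.ne_zero_iff_exists.mp v.2.1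
      by_cases hsig : sigmaRel u' v'
      · -- find a common neighbor among a, b
        have key : ¬ sigmaRel u' a ∨ ¬ sigmaRel u' b := by
          by_contra hk
          push_neg at hk
          exact hab (htrans a u' b (hsymm _ _ hk.1) hk.2)
        -- pick w depending on the case
        rcases key with hk | hk
        · have hva : ¬ sigmaRel v' a := fun h => hk (htrans _ _ _ hsig h)
          have hadj1 : G.Adj u ⟨↑a, va⟩ := by
            refine ⟨?_, by rw [← hu']; exact omg_eq_single.mpr hk⟩
            rw [← hu']
            simp only [ne_eq, WithZero.coe_inj]
            rintro rfl; exact hk (hrefl u')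
          have hadj2 : G.Adj ⟨↑a, va⟩ v := by
            refine ⟨?_, by rw [← hv', omg_comm]; exact omg_eq_single.mpr hva⟩
            rw [← hv']
            simp only [ne_eq, WithZero.coe_inj]
            rintro rfl; exact hva (hrefl _)
          calc G.edist u v ≤ G.edist u ⟨↑a, va⟩ + G.edist ⟨↑a, va⟩ v :=
                SimpleGraph.edist_triangle
            _ ≤ 1 + 1 := by
                rw [SimpleGraph.edist_eq_one_iff_adj.mpr hadj1,
                  SimpleGraph.edist_eq_one_iff_adj.mpr hadj2]
            _ = 2 := by norm_num
        · have hvb : ¬ sigmaRel v' b := fun h => hk (htrans _ _ _ hsig h)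
          have hadj1 : G.Adj u ⟨↑b, vb⟩ := by
            refine ⟨?_, by rw [← hu']; exact omg_eq_single.mpr hk⟩
            rw [← hu']
            simp only [ne_eq, WithZero.coe_inj]
            rintro rfl; exact hk (hrefl u')
          have hadj2 : G.Adj ⟨↑b, vb⟩ v := by
            refine ⟨?_, by rw [← hv', omg_comm]; exact omg_eq_single.mpr hvb⟩
            rw [← hv']
            simp only [ne_eq, WithZero.coe_inj]
            rintro rfl; exact hvb (hrefl _)
          calc G.edist u v ≤ G.edist u ⟨↑b, vb⟩ + G.edist ⟨↑b, vb⟩ v :=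
                SimpleGraph.edist_triangle
            _ ≤ 1 + 1 := by
                rw [SimpleGraph.edist_eq_one_iff_adj.mpr hadj1,
                  SimpleGraph.edist_eq_one_iff_adj.mpr hadj2]
            _ = 2 := by norm_num
      · have hadjuv : G.Adj u v := by
          refine ⟨Subtype.coe_ne_coe.mpr huv, ?_⟩
          rw [← hu', ← hv']
          exact omg_eq_single.mpr hsig
        rw [SimpleGraph.edist_eq_one_iff_adj.mpr hadjuv]
        norm_num
    -- conclude membership
    have hnetop : G.ediam ≠ ⊤ := fun h => by rw [h] at h2; exact (by norm_num : ¬ (⊤:ℕ∞) ≤ 2) h2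
    lift G.ediam to ℕ using hnetop with n hn
    simp only [Set.mem_insert_iff, Set.mem_singleton_iff]
    have h1' : 1 ≤ n := by exact_mod_cast h1
    have h2' : n ≤ 2 := by exact_mod_cast h2
    interval_cases n
    · left; rfl
    · right; rfl
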